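/- The measure μ is not absolutely continuous with respect to Haar (Lebesgue) measure on 𝕋; indeed μ̂(1) ≠ 0 and μ̂(2^n) = μ̂(1) for all n ≥ 0, so the Fourier–Stieltjes coefficients μ̂(k) do not tend to 0 as |k| → ∞. -/

import Mathlib

open MeasureTheory Filter Topology Real
open scoped ENNReal

noncomputable section

/-- Stern's diatomic sequence: s(0)=0, s(1)=1, s(2n)=s(n), s(2n+1)=s(n)+s(n+1). -/
def stern : ℕ → ℕ
  | 0 => 0
  | 1 => 1
  | n + 2 =>
    if h : n % 2 = 0 then stern (n / 2 + 1)
    else stern (n / 2 + 1) + stern (n / 2 + 2)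
decreasing_by all_goals omega
/-- The probability measure μ_n = 3^{-n} ∑_{m=0}^{2^n-1} s(2^n+m) δ_{m/2^n} on the 1-torus. -/
def sternMeasure (n : ℕ) : Measure UnitAddCircle :=
  ((3 : ℝ≥0∞) ^ n)⁻¹ • ∑ m ∈ Finset.range (2 ^ n),
    (stern (2 ^ n + m) : ℝ≥0∞) • Measure.dirac ((m / 2 ^ n : ℝ) : UnitAddCircle)
/-- The Fourier–Stieltjes coefficient ν̂(k) = ∫_𝕋 e^{-2πikx} dν(x) of a measure ν on the 1-torus. -/
def fourierCoeffMeasure (ν : Measure UnitAddCircle) (k : ℤ) : ℂ :=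
  ∫ x, fourier (-k) x ∂ν

/-!
The Fourier coefficients of `μ_n` are partial Riesz products,
`μ̂_n(k) = ∏_{j<n} (1 + 2 cos(π k / 2^j)) / 3`. This comes from the identity
`z P_{n+1}(z) + 1 = (1 + z + z²) P_n(z²) + z^{2^{n+1}}` for `P_n(z) = ∑_{m<2^n} s(2^n + m) z^m`,
evaluated at `z = e^{-iπk/2^n}`, where `z^{2^{n+1}} = 1` and
`1 + z + z² = z (1 + 2 cos(π k / 2^n))`.
Doubling `k` turns the factor `j = 0` into `1` and shifts the others, so `μ̂(2k) = μ̂(k)`.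
For `k = 1` the first two factors are `-1/3` and `1/3` and the factor `j + 2` lies in
`[1 - 2^{-j}/3, 1]`, so every partial product from `n = 2` on is at most `-1/27` and `μ̂(1) ≠ 0`.
By the Riemann–Lebesgue lemma this is incompatible with `μ ≪ volume`.
-/

open Finset FourierTransform

lemma stern_one : stern 1 = 1 := by rw [stern]

lemma stern_two_mul {n : ℕ} (hn : 1 ≤ n) : stern (2 * n) = stern n := by
  obtain ⟨m, rfl⟩ := Nat.exists_eq_add_of_le' hn
  rw [show 2 * (m + 1) = 2 * m + 2 by ring, stern, dif_pos (by omega)]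
  congr 1
  omega

lemma stern_two_mul_add_one {n : ℕ} (hn : 1 ≤ n) :
    stern (2 * n + 1) = stern n + stern (n + 1) := by
  obtain ⟨m, rfl⟩ := Nat.exists_eq_add_of_le' hn
  rw [show 2 * (m + 1) + 1 = 2 * m + 1 + 2 by ring, stern, dif_neg (by omega)]
  congr 2 <;> omega

lemma stern_two_pow (n : ℕ) : stern (2 ^ n) = 1 := by
  induction n with
  | zero => exact stern_one
  | succ n ih => rw [pow_succ', stern_two_mul Nat.one_le_two_pow, ih]

theorem Finset.sum_range_two_mul {M : Type*} [AddCommMonoid M] (f : ℕ → M) (n : ℕ) :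
    ∑ m ∈ range (2 * n), f m = ∑ j ∈ range n, (f (2 * j) + f (2 * j + 1)) := by
  induction n with
  | zero => simp
  | succ n ih => rw [mul_add_one, sum_range_succ, sum_range_succ, sum_range_succ, ih, add_assoc]

def sternSum {R : Type*} [CommSemiring R] (n : ℕ) (z : R) : R :=
  ∑ m ∈ range (2 ^ n), (stern (2 ^ n + m) : R) * z ^ m

theorem sternSum_succ {R : Type*} [CommSemiring R] (n : ℕ) (z : R) :
    z * sternSum (n + 1) z + 1 = (1 + z + z ^ 2) * sternSum n (z ^ 2) + z ^ 2 ^ (n + 1) := by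
  have hN : 1 ≤ 2 ^ n := Nat.one_le_two_pow
  have hshift : ∑ j ∈ range (2 ^ n), (stern (2 ^ n + (j + 1)) : R) * (z ^ 2) ^ (j + 1) + 1 =
      sternSum n (z ^ 2) + z ^ 2 ^ (n + 1) := by
    have h := (sum_range_succ' (fun j => (stern (2 ^ n + j) : R) * (z ^ 2) ^ j) (2 ^ n)).symm.trans
      (sum_range_succ _ _)
    rw [add_zero, stern_two_pow, ← two_mul, ← pow_succ', stern_two_pow] at h
    simpa [sternSum, ← pow_mul, ← pow_succ'] using h
  calc z * sternSum (n + 1) z + 1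
      = ∑ j ∈ range (2 ^ n), ((z + z ^ 2) * ((stern (2 ^ n + j) : R) * (z ^ 2) ^ j) +
          (stern (2 ^ n + (j + 1)) : R) * (z ^ 2) ^ (j + 1)) + 1 := by
        rw [sternSum, pow_succ', sum_range_two_mul, mul_sum]
        congr 1
        refine sum_congr rfl fun j _ => ?_
        rw [← mul_add, show 2 * 2 ^ n + (2 * j + 1) = 2 * (2 ^ n + j) + 1 by ring,
          stern_two_mul (by omega), stern_two_mul_add_one (by omega), add_assoc]
        push_cast
        ring
    _ = (1 + z + z ^ 2) * sternSum n (z ^ 2) + z ^ 2 ^ (n + 1) := by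
        rw [sum_add_distrib, ← mul_sum, add_assoc, hshift, sternSum]
        ring

theorem sternSum_exp (k : ℤ) (n : ℕ) :
    sternSum n (Complex.exp (-(2 * π * k / 2 ^ n : ℝ) * Complex.I)) =
      ∏ j ∈ range n, ((1 + 2 * cos (π * k / 2 ^ j) : ℝ) : ℂ) := by
  induction n with
  | zero => simp [sternSum, stern_one]
  | succ n ih =>
    set θ : ℝ := π * k / 2 ^ n
    have hθ : 2 * π * k / 2 ^ (n + 1) = θ := by simp only [θ, pow_succ]; field_simp
    set z := Complex.exp (-θ * Complex.I)
    have hfac : 1 + z + z ^ 2 = z * (1 + 2 * Complex.cos θ) := by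
      have hz : z * Complex.exp (θ * Complex.I) = 1 := by rw [← Complex.exp_add]; simp
      rw [Complex.two_cos]
      linear_combination -hz
    have hz2 : z ^ 2 = Complex.exp (-(2 * π * k / 2 ^ n : ℝ) * Complex.I) := by
      rw [← Complex.exp_nat_mul]
      congr 1
      simp only [θ]
      push_cast
      ring
    have hz_pow : z ^ 2 ^ (n + 1) = 1 := by
      rw [← Complex.exp_nat_mul, ← Complex.exp_int_mul_two_pi_mul_I (-k)]
      congr 1
      simp only [θ]
      push_cast
      field_simp
      ring
    have h := sternSum_succ n z
    rw [hfac, hz2, hz_pow, ih, add_left_inj, mul_assoc, mul_right_inj' (Complex.exp_ne_zero _)] at h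
    rw [hθ, h, prod_range_succ, mul_comm]
    simp only [θ]
    push_cast
    ring

theorem Finset.one_sub_sum_one_sub_le_prod {ι R : Type*} [CommRing R] [LinearOrder R]
    [IsStrictOrderedRing R] (s : Finset ι) {f : ι → R} (h0 : ∀ i ∈ s, 0 ≤ f i)
    (h1 : ∀ i ∈ s, f i ≤ 1) : 1 - ∑ i ∈ s, (1 - f i) ≤ ∏ i ∈ s, f i := by
  induction s using Finset.cons_induction with
  | empty => simp
  | cons a s _ ih =>
    rw [sum_cons, prod_cons]
    have hs : 1 - ∑ i ∈ s, (1 - f i) ≤ ∏ i ∈ s, f i :=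
      ih (fun i hi => h0 i (mem_cons_of_mem hi)) fun i hi => h1 i (mem_cons_of_mem hi)
    have hS : 0 ≤ ∑ i ∈ s, (1 - f i) :=
      sum_nonneg fun i hi => sub_nonneg.2 (h1 i (mem_cons_of_mem hi))
    have ha0 := h0 a (mem_cons_self a s)
    have ha1 := h1 a (mem_cons_self a s)
    nlinarith [mul_le_mul_of_nonneg_left hs ha0, mul_le_of_le_one_left hS ha1]

def rieszFactor (k : ℤ) (j : ℕ) : ℝ := (1 + 2 * cos (π * k / 2 ^ j)) / 3

def rieszProd (k : ℤ) (n : ℕ) : ℝ := ∏ j ∈ range n, rieszFactor k j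

theorem rieszFactor_two_mul_zero (k : ℤ) : rieszFactor (2 * k) 0 = 1 := by
  rw [rieszFactor, show π * ((2 * k : ℤ) : ℝ) / 2 ^ 0 = k * (2 * π) by push_cast; ring,
    cos_int_mul_two_pi]
  norm_num

theorem rieszFactor_two_mul_succ (k : ℤ) (j : ℕ) :
    rieszFactor (2 * k) (j + 1) = rieszFactor k j := by
  rw [rieszFactor, rieszFactor, pow_succ]
  push_cast
  ring_nf

theorem rieszProd_two_mul_succ (k : ℤ) (n : ℕ) : rieszProd (2 * k) (n + 1) = rieszProd k n := by
  simp [rieszProd, prod_range_succ', rieszFactor_two_mul_succ, rieszFactor_two_mul_zero]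

theorem rieszFactor_one_zero : rieszFactor 1 0 = -1 / 3 := by
  norm_num [rieszFactor]

theorem rieszFactor_one_one : rieszFactor 1 1 = 1 / 3 := by
  norm_num [rieszFactor]

theorem rieszFactor_le_one (k : ℤ) (j : ℕ) : rieszFactor k j ≤ 1 := by
  have := cos_le_one (π * k / 2 ^ j)
  rw [rieszFactor]
  linarith

theorem one_sub_rieszFactor_one_le (j : ℕ) : 1 - rieszFactor 1 (j + 2) ≤ (1 / 2) ^ j / 3 := by
  set x := π / 2 ^ (j + 2)
  have hx0 : 0 ≤ x := by positivity
  have hx : x ≤ (1 / 2) ^ j := by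
    rw [div_le_iff₀ (by positivity), pow_add, ← mul_assoc, ← mul_pow]
    norm_num
    linarith [pi_le_four]
  have hcos := one_sub_sq_div_two_le_cos (x := x)
  have hxx : x ^ 2 ≤ x := by
    nlinarith [pow_le_one₀ (n := j) (by norm_num : (0 : ℝ) ≤ 1 / 2) (by norm_num)]
  rw [rieszFactor, Int.cast_one, mul_one]
  linarith

theorem rieszProd_one_le (n : ℕ) : rieszProd 1 (n + 2) ≤ -1 / 27 := by
  have htail : 1 / 3 ≤ ∏ i ∈ range n, rieszFactor 1 (i + 2) := by
    have hsum : ∑ i ∈ range n, (1 - rieszFactor 1 (i + 2)) ≤ 2 / 3 := by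
      calc ∑ i ∈ range n, (1 - rieszFactor 1 (i + 2)) ≤ ∑ i ∈ range n, (1 / 2 : ℝ) ^ i / 3 :=
            sum_le_sum fun i _ => one_sub_rieszFactor_one_le i
        _ ≤ 2 / 3 := by rw [← sum_div]; linarith [sum_geometric_two_le n]
    have hpos (i : ℕ) : 0 ≤ rieszFactor 1 (i + 2) := by
      linarith [one_sub_rieszFactor_one_le i,
        pow_le_one₀ (n := i) (by norm_num : (0 : ℝ) ≤ 1 / 2) (by norm_num)]
    linarith [one_sub_sum_one_sub_le_prod (range n) (fun i _ => hpos i)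
      fun i _ => rieszFactor_le_one 1 (i + 2)]
  rw [rieszProd, prod_range_succ', prod_range_succ', rieszFactor_one_zero, rieszFactor_one_one]
  linarith

theorem eq_of_tendsto_rieszProd_two_mul {k : ℤ} {a b : ℂ}
    (ha : Tendsto (fun n => (rieszProd (2 * k) n : ℂ)) atTop (𝓝 a))
    (hb : Tendsto (fun n => (rieszProd k n : ℂ)) atTop (𝓝 b)) : a = b :=
  tendsto_nhds_unique
    (by simpa only [rieszProd_two_mul_succ] using (tendsto_add_atTop_iff_nat 1).2 ha) hb

theorem ne_zero_of_tendsto_rieszProd_one {c : ℂ}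
    (h : Tendsto (fun n => (rieszProd 1 n : ℂ)) atTop (𝓝 c)) : c ≠ 0 := by
  have hre : c.re ≤ -1 / 27 := by
    refine le_of_tendsto ((Complex.continuous_re.tendsto c).comp h) ?_
    filter_upwards [eventually_ge_atTop 2] with n hn
    obtain ⟨m, rfl⟩ := Nat.exists_eq_add_of_le' hn
    simpa using rieszProd_one_le m
  rintro rfl
  norm_num at hre

theorem integral_finset_sum_smul_dirac {X E ι : Type*} [MeasurableSpace X]
    [MeasurableSingletonClass X] [NormedAddCommGroup E] [NormedSpace ℝ E] [CompleteSpace E]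
    (s : Finset ι) (c : ι → ℝ≥0∞) (hc : ∀ i ∈ s, c i ≠ ∞) (x : ι → X) (f : X → E) :
    ∫ y, f y ∂(∑ i ∈ s, c i • Measure.dirac (x i)) = ∑ i ∈ s, (c i).toReal • f (x i) := by
  rw [integral_finsetSum_measure fun i hi =>
    (integrable_dirac enorm_lt_top).smul_measure (hc i hi)]
  simp_rw [integral_smul_measure, integral_dirac]

instance isFiniteMeasure_sternMeasure (n : ℕ) : IsFiniteMeasure (sternMeasure n) :=
  have (m : ℕ) := (Measure.dirac ((m / 2 ^ n : ℝ) : UnitAddCircle)).smul_finite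
    (ENNReal.natCast_ne_top (stern (2 ^ n + m)))
  Measure.smul_finite _ (by simp)

theorem fourier_neg_coe_div_two_pow (k : ℤ) (n m : ℕ) :
    fourier (-k) ((m / 2 ^ n : ℝ) : UnitAddCircle) =
      Complex.exp (-(2 * π * k / 2 ^ n : ℝ) * Complex.I) ^ m := by
  rw [fourier_coe_apply, ← Complex.exp_nat_mul]
  congr 1
  push_cast
  ring

theorem fourierCoeffMeasure_sternMeasure (k : ℤ) (n : ℕ) :
    fourierCoeffMeasure (sternMeasure n) k = rieszProd k n := by
  rw [fourierCoeffMeasure, sternMeasure, integral_smul_measure,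
    integral_finset_sum_smul_dirac _ _ fun _ _ => ENNReal.natCast_ne_top _]
  simp_rw [fourier_neg_coe_div_two_pow, ENNReal.toReal_natCast, Complex.real_smul,
    Complex.ofReal_natCast]
  change _ * sternSum n _ = _
  rw [sternSum_exp]
  simp only [rieszProd, rieszFactor, prod_div_distrib, prod_const, card_range]
  push_cast
  simp [div_eq_inv_mul]

theorem tendsto_integral_rclike_of_tendsto_integral_real {X ι 𝕜 : Type*} [TopologicalSpace X]
    [CompactSpace X] [MeasurableSpace X] [OpensMeasurableSpace X] [RCLike 𝕜] {l : Filter ι}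
    {ν : ι → Measure X} [∀ i, IsFiniteMeasure (ν i)] {μ : Measure X} [IsFiniteMeasure μ]
    (h : ∀ f : C(X, ℝ), Tendsto (fun i => ∫ x, f x ∂ν i) l (𝓝 (∫ x, f x ∂μ)))
    (f : C(X, 𝕜)) : Tendsto (fun i => ∫ x, f x ∂ν i) l (𝓝 (∫ x, f x ∂μ)) := by
  have hf (ρ : Measure X) [IsFiniteMeasure ρ] : Integrable f ρ :=
    f.continuous.integrable_of_hasCompactSupport (HasCompactSupport.of_compactSpace f)
  rw [← integral_re_add_im (hf μ)]
  simp_rw [← integral_re_add_im (hf (ν _))]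
  refine Tendsto.add ?_ (Tendsto.mul_const _ ?_)
  · exact (RCLike.continuous_ofReal.tendsto _).comp (h (.comp ⟨_, RCLike.continuous_re⟩ f))
  · exact (RCLike.continuous_ofReal.tendsto _).comp (h (.comp ⟨_, RCLike.continuous_im⟩ f))

theorem tendsto_rieszProd_fourierCoeffMeasure {μ : Measure UnitAddCircle} [IsFiniteMeasure μ]
    (hlim : ∀ f : C(UnitAddCircle, ℝ),
      Tendsto (fun n => ∫ x, f x ∂(sternMeasure n)) atTop (𝓝 (∫ x, f x ∂μ))) (k : ℤ) :
    Tendsto (fun n => (rieszProd k n : ℂ)) atTop (𝓝 (fourierCoeffMeasure μ k)) :=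
  (tendsto_integral_rclike_of_tendsto_integral_real hlim (fourier (-k))).congr
    (fourierCoeffMeasure_sternMeasure k)

theorem tendsto_fourierCoeff_cocompact {T : ℝ} [hT : Fact (0 < T)] {E : Type*}
    [NormedAddCommGroup E] [NormedSpace ℂ E] (f : AddCircle T → E) :
    Tendsto (fourierCoeff f) (cocompact ℤ) (𝓝 0) := by
  set F : ℝ → E := Set.indicator (Set.Ioc 0 T) fun x => f x
  have hcoeff (k : ℤ) : fourierCoeff f k = (1 / T) • ∫ v, 𝐞 (-(v * (k / T))) • F v := by
    rw [fourierCoeff_eq_intervalIntegral f k 0, zero_add,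
      intervalIntegral.integral_of_le hT.out.le, ← integral_indicator measurableSet_Ioc]
    congr 2 with v
    by_cases hv : v ∈ Set.Ioc 0 T
    · rw [Set.indicator_of_mem hv, show F v = f v from Set.indicator_of_mem hv _, Circle.smul_def,
        Real.fourierChar_apply, fourier_coe_apply]
      congr 2
      push_cast
      ring
    · rw [Set.indicator_of_notMem hv, show F v = 0 from Set.indicator_of_notMem hv _, smul_zero]
  have hk : Tendsto (fun k : ℤ => (k : ℝ) / T) (cocompact ℤ) (cocompact ℝ) :=
    ((Homeomorph.mulRight₀ T⁻¹ (inv_ne_zero hT.out.ne')).isClosedEmbedding.tendsto_cocompact).comp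
      (cocompact_eq_cofinite ℤ ▸ Int.tendsto_coe_cofinite)
  have h := ((Real.tendsto_integral_exp_smul_cocompact F).comp hk).const_smul (1 / T)
  rw [smul_zero] at h
  exact h.congr fun k => (hcoeff k).symm

theorem tendsto_fourierCoeffMeasure_cocompact {μ : Measure UnitAddCircle} [SigmaFinite μ]
    (hμ : μ ≪ volume) : Tendsto (fourierCoeffMeasure μ) (cocompact ℤ) (𝓝 0) := by
  have hcoeff (k : ℤ) : fourierCoeffMeasure μ k =
      fourierCoeff (fun x => ((μ.rnDeriv volume x).toReal : ℂ)) k := by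
    rw [fourierCoeffMeasure, fourierCoeff, ← integral_rnDeriv_smul hμ,
      AddCircle.volume_eq_smul_haarAddCircle, ENNReal.ofReal_one, one_smul]
    simp_rw [Complex.real_smul, smul_eq_mul, mul_comm]
  exact (tendsto_fourierCoeff_cocompact _).congr fun k => (hcoeff k).symm

theorem tendsto_two_pow_cocompact : Tendsto (fun n : ℕ => (2 : ℤ) ^ n) atTop (cocompact ℤ) := by
  rw [cocompact_eq_atBot_atTop]
  exact (tendsto_pow_atTop_atTop_of_one_lt one_lt_two).mono_right le_sup_right

/-- The weak limit μ is not absolutely continuous w.r.t. Haar measure: indeed μ̂(1) ≠ 0 and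
μ̂(2^n) = μ̂(1) for all n ≥ 0, so the coefficients μ̂(k) do not tend to 0 as |k| → ∞. -/
theorem sternLimit_not_absolutelyContinuous (μ : Measure UnitAddCircle)
    (hμ : IsProbabilityMeasure μ)
    (hlim : ∀ f : C(UnitAddCircle, ℝ),
      Tendsto (fun n => ∫ x, f x ∂(sternMeasure n)) atTop (𝓝 (∫ x, f x ∂μ))) :
    fourierCoeffMeasure μ 1 ≠ 0 ∧
    (∀ n : ℕ, fourierCoeffMeasure μ (2 ^ n) = fourierCoeffMeasure μ 1) ∧
    ¬ Tendsto (fun k : ℤ => fourierCoeffMeasure μ k) (Filter.cocompact ℤ) (𝓝 0) ∧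
    ¬ μ.AbsolutelyContinuous (volume : Measure UnitAddCircle) := by
  have hcoeff := tendsto_rieszProd_fourierCoeffMeasure hlim
  have h_one : fourierCoeffMeasure μ 1 ≠ 0 := ne_zero_of_tendsto_rieszProd_one (hcoeff 1)
  have h_two_pow (n : ℕ) : fourierCoeffMeasure μ (2 ^ n) = fourierCoeffMeasure μ 1 := by
    induction n with
    | zero => rw [pow_zero]
    | succ n ih => rw [pow_succ', eq_of_tendsto_rieszProd_two_mul (hcoeff _) (hcoeff _), ih]
  have h_not_tendsto : ¬ Tendsto (fun k : ℤ => fourierCoeffMeasure μ k) (cocompact ℤ) (𝓝 0) :=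
    fun h => h_one (tendsto_const_nhds_iff.1
      ((h.comp tendsto_two_pow_cocompact).congr fun n => h_two_pow n))
  exact ⟨h_one, h_two_pow, h_not_tendsto,
    fun hac => h_not_tendsto (tendsto_fourierCoeffMeasure_cocompact hac)⟩
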